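/- arXiv:2602.15463 — 4 statements merged into one kernel-verified Lean document; each statement's English description precedes it below -/
import Mathlib

section
/- Let Γ be a finitely generated group, G a finite group with subgroups G₁, G₂, and φ : Γ → G a surjective homomorphism. If there exists a finite group H₀ that is a quotient of φ⁻¹(G₁) but not a quotient of φ⁻¹(G₂), then there is a finite group H, a surjective homomorphism ψ : Γ → H, and a homomorphism θ : H → G with φ = θ ∘ ψ, such that ψ(φ⁻¹(G₁)) and ψ(φ⁻¹(G₂)) are not isomorphic. -/
/-- Let `Γ` be a finitely generated group, `G` a finite group with subgroups `G₁, G₂`,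
and `φ : Γ → G` a surjective homomorphism.  If some finite group `H₀` is a quotient of
`φ⁻¹(G₁)` but not of `φ⁻¹(G₂)`, then `φ` factors as `θ ∘ ψ` through a finite group `H`
in such a way that the images `ψ(φ⁻¹(G₁))` and `ψ(φ⁻¹(G₂))` are not isomorphic. -/
theorem stmt6 {Γ : Type*} [Group Γ] (hΓ : Group.FG Γ) (G : Type*) [Group G] [Finite G]
    (G₁ G₂ : Subgroup G) (φ : Γ →* G) (hφ : Function.Surjective φ)
    (h : ∃ (H₀ : Type) (_ : Group H₀) (_ : Finite H₀),
      (∃ f : (G₁.comap φ) →* H₀, Function.Surjective f) ∧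
      ¬ (∃ f : (G₂.comap φ) →* H₀, Function.Surjective f)) :
    ∃ (H : Type) (_ : Group H) (_ : Finite H) (ψ : Γ →* H) (θ : H →* G),
      Function.Surjective ψ ∧ θ.comp ψ = φ ∧
      ¬ Nonempty (((G₁.comap φ).map ψ) ≃* ((G₂.comap φ).map ψ)) := by
  obtain ⟨H₀, _, _, ⟨f, hf⟩, hnf⟩ := h
  let Γ₁ : Subgroup Γ := G₁.comap φ
  let Γ₂ : Subgroup Γ := G₂.comap φ
  -- kernel of f, pushed to Γ
  set N : Subgroup Γ := f.ker.map Γ₁.subtype with hN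
  have hΓ₁fi : Γ₁.FiniteIndex := by
    constructor
    rw [Subgroup.index_comap_of_surjective _ hφ]
    exact Subgroup.index_ne_zero_of_finite
  have hNfi : N.FiniteIndex := by
    constructor
    rw [hN, Subgroup.index_map_subtype]
    have h1 : f.ker.FiniteIndex := by
      have : Finite f.range := Set.Finite.to_subtype (Set.toFinite _)
      infer_instance
    exact Nat.mul_ne_zero h1.index_ne_zero hΓ₁fi.index_ne_zero
  set K : Subgroup Γ := (N ⊓ φ.ker).normalCore with hK
  have hKN : K ≤ N := le_trans (Subgroup.normalCore_le _) inf_le_left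
  have hKker : K ≤ φ.ker := le_trans (Subgroup.normalCore_le _) inf_le_right
  have hKfi0 : (N ⊓ φ.ker).FiniteIndex := by
    have : φ.ker.FiniteIndex := by
      have : Finite φ.range := Set.Finite.to_subtype (Set.toFinite _)
      infer_instance
    infer_instance
  have hKfi : K.FiniteIndex := Subgroup.finiteIndex_normalCore _
  have hKnorm : K.Normal := Subgroup.normalCore_normal _
  have hfin : Finite (Γ ⧸ K) := (Subgroup.finite_quotient_of_finiteIndex : Finite (Γ ⧸ K))
  -- shrink to Type 0
  have hsmall : Small.{0} (Γ ⧸ K) := Countable.toSmall _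
  set H : Type := Shrink.{0} (Γ ⧸ K) with hH
  let eH : H ≃* (Γ ⧸ K) := Shrink.mulEquiv
  let ψ : Γ →* H := eH.symm.toMonoidHom.comp (QuotientGroup.mk' K)
  let θ : H →* G :=
    (QuotientGroup.lift K φ (fun x hx => MonoidHom.mem_ker.mp (hKker hx))).comp eH.toMonoidHom
  have hψsurj : Function.Surjective ψ :=
    eH.symm.surjective.comp (QuotientGroup.mk'_surjective K)
  refine ⟨H, inferInstance, Finite.of_equiv _ (equivShrink _), ψ, θ, hψsurj, ?_, ?_⟩
  · ext x
    simp only [ψ, θ, MonoidHom.comp_apply, MulEquiv.coe_toMonoidHom,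
      MulEquiv.apply_symm_apply]
    rfl
  · rintro ⟨e⟩
    apply hnf
    have hker : (ψ.comp Γ₁.subtype).ker ≤ f.ker := by
      intro x hx
      have hx1 : (QuotientGroup.mk' K) (x : Γ) = 1 := by
        have h2 : eH (ψ (x : Γ)) = eH 1 := congrArg eH hx
        rwa [map_one, show ψ (x : Γ) = eH.symm ((QuotientGroup.mk' K) (x : Γ)) from rfl,
          MulEquiv.apply_symm_apply] at h2
      have hxK : (x : Γ) ∈ K := (QuotientGroup.eq_one_iff _).mp hx1
      have hxN : (x : Γ) ∈ N := hKN hxK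
      rw [hN] at hxN
      obtain ⟨y, hy1, hy2⟩ := hxN
      have : y = x := Subtype.ext hy2
      rwa [← this]
    have hrange : (ψ.comp Γ₁.subtype).range = Γ₁.map ψ := by
      rw [MonoidHom.range_comp, Subgroup.range_subtype]
    set q := ψ.comp Γ₁.subtype with hq
    let g₀ : Γ₁ ⧸ q.ker →* H₀ :=
      QuotientGroup.lift _ f (fun x hx => MonoidHom.mem_ker.mp (hker hx))
    have hg₀ : Function.Surjective g₀ := by
      intro y
      obtain ⟨x, hx⟩ := hf y
      exact ⟨QuotientGroup.mk x, hx⟩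
    let e₁ : Γ₁ ⧸ q.ker ≃* q.range := QuotientGroup.quotientKerEquivRange q
    let e₂ : q.range ≃* (Γ₁.map ψ) := MulEquiv.subgroupCongr hrange
    let g : (Γ₁.map ψ) →* H₀ := g₀.comp ((e₂.symm.trans e₁.symm).toMonoidHom)
    have hg : Function.Surjective g :=
      hg₀.comp (e₂.symm.trans e₁.symm).surjective
    refine ⟨(g.comp e.symm.toMonoidHom).comp (ψ.subgroupMap Γ₂), ?_⟩
    exact (hg.comp e.symm.surjective).comp (ψ.subgroupMap_surjective Γ₂)
end

section
/- Let p be a prime, G a finite group with |G| < p - 1, and W = C_{p-1} ≀ G the regular wreath product with base group Q = C_{p-1}^{|G|}. Then the only subgroup of W isomorphic to Q is Q itself. -/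
def wreathAut (G C : Type*) [Group G] [Group C] : G →* MulAut (G → C) where
  toFun g := MulEquiv.arrowCongr (Equiv.mulLeft g) (MulEquiv.refl C)
  map_one' := by ext f x; simp [MulEquiv.arrowCongr]; rfl
  map_mul' a b := by ext f x; simp [MulEquiv.arrowCongr, Equiv.mulLeft, mul_assoc]

/-- In the regular wreath product `W = C_{p-1} ≀ G` with `|G| < p - 1`, the only
subgroup of `W` isomorphic to the base group `Q = C_{p-1}^{|G|}` is `Q` itself. -/
theorem stmt11 (p : ℕ) (hp : p.Prime) (G : Type*) [Group G] [Finite G]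
    (hlt : Nat.card G < p - 1)
    (H : Subgroup ((G → Multiplicative (ZMod (p - 1)))
        ⋊[wreathAut G (Multiplicative (ZMod (p - 1)))] G))
    (hiso : Nonempty (H ≃* (G → Multiplicative (ZMod (p - 1))))) :
    H = (SemidirectProduct.inl : (G → Multiplicative (ZMod (p - 1))) →*
        (G → Multiplicative (ZMod (p - 1)))
          ⋊[wreathAut G (Multiplicative (ZMod (p - 1)))] G).range := by
  classical
  obtain ⟨e⟩ := hiso
  set C := Multiplicative (ZMod (p - 1)) with hC
  have hn1 : 1 ≤ Nat.card G := Nat.one_le_iff_ne_zero.mpr Nat.card_pos.ne'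
  have hm2 : 2 ≤ p - 1 := by omega
  haveI : NeZero (p - 1) := ⟨by omega⟩
  haveI : Finite C := by unfold C; infer_instance
  have hcardC : Nat.card C = p - 1 := Nat.card_zmod _
  -- W is finite
  haveI : Finite ((G → C) ⋊[wreathAut G C] G) :=
    Finite.of_injective (fun w => (w.left, w.right))
      (fun a b h => SemidirectProduct.ext (congrArg Prod.fst h) (congrArg Prod.snd h))
  -- H is commutative
  have hcomm : ∀ a b : H, a * b = b * a := fun a b =>
    e.injective (by rw [map_mul, map_mul, mul_comm])
  -- key claim: every element of H has trivial right component
  have key : ∀ w : (G → C) ⋊[wreathAut G C] G, w ∈ H → w.right = 1 := by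
    by_contra hkey
    push_neg at hkey
    obtain ⟨w, hwH, hw⟩ := hkey
    set g := w.right with hg
    set f : H →* G := SemidirectProduct.rightHom.comp H.subtype with hf
    -- elements of the kernel are fixed by the action of g
    have hfix : ∀ k : f.ker, ∀ x : G,
        ((k : H) : (G → C) ⋊[wreathAut G C] G).left (g⁻¹ * x)
          = ((k : H) : (G → C) ⋊[wreathAut G C] G).left x := by
      intro k x
      set wh : H := ⟨w, hwH⟩ with hwh
      have hc : (wh : (G → C) ⋊[wreathAut G C] G) * (k : H) = (k : H) * wh := by
        exact_mod_cast congrArg (Subtype.val) (hcomm wh (k : H))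
      have hkr : ((k : H) : (G → C) ⋊[wreathAut G C] G).right = 1 := k.2
      have hl := congrArg SemidirectProduct.left hc
      rw [SemidirectProduct.mul_left, SemidirectProduct.mul_left, hkr, map_one] at hl
      simp only [MulAut.one_apply] at hl
      have hql := mul_left_cancel (hl.trans (mul_comm _ _))
      exact congrFun hql x
    -- the kernel injects into functions on G \ {g⁻¹}
    have hinj : Function.Injective
        (fun (k : f.ker) (x : {x : G // x ≠ g⁻¹}) =>
          ((k : H) : (G → C) ⋊[wreathAut G C] G).left (x : G)) := by
      intro k k' hkk
      have hgne : (1 : G) ≠ g⁻¹ := fun h => hw (by rw [← inv_inv g, ← h, inv_one])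
      have hval : ∀ x : G, ((k : H) : (G → C) ⋊[wreathAut G C] G).left x
          = ((k' : H) : (G → C) ⋊[wreathAut G C] G).left x := by
        intro x
        by_cases hx : x = g⁻¹
        · subst hx
          have h1 := hfix k 1
          have h1' := hfix k' 1
          rw [mul_one] at h1 h1'
          rw [h1, h1']
          exact congrFun hkk ⟨1, hgne⟩
        · exact congrFun hkk ⟨x, hx⟩
      have : ((k : H) : (G → C) ⋊[wreathAut G C] G) = ((k' : H) : (G → C) ⋊[wreathAut G C] G) :=
        SemidirectProduct.ext (funext hval) (k.2.trans k'.2.symm)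
      exact Subtype.ext (Subtype.ext this)
    -- cardinality computations
    have hcardH : Nat.card H = (p - 1) ^ Nat.card G := by
      rw [Nat.card_congr e.toEquiv, Nat.card_fun, hcardC]
    have hsplit : Nat.card H = Nat.card f.range * Nat.card f.ker := by
      rw [Subgroup.card_eq_card_quotient_mul_card_subgroup f.ker,
        Nat.card_congr (QuotientGroup.quotientKerEquivRange f).toEquiv]
    have hr : Nat.card f.range ≤ Nat.card G :=
      Nat.card_le_card_of_injective _ Subtype.val_injective
    have hsub : Nat.card {x : G // x ≠ g⁻¹} = Nat.card G - 1 := by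
      haveI := Fintype.ofFinite G
      simp only [Nat.card_eq_fintype_card]
      rw [Fintype.card_subtype_compl (p := fun x => x = g⁻¹), Fintype.card_subtype_eq]
    have hk : Nat.card f.ker ≤ (p - 1) ^ (Nat.card G - 1) := by
      calc Nat.card f.ker ≤ Nat.card ({x : G // x ≠ g⁻¹} → C) :=
            Nat.card_le_card_of_injective _ hinj
        _ = (p - 1) ^ (Nat.card G - 1) := by rw [Nat.card_fun, hcardC, hsub]
    have hcontra : (p - 1) ^ Nat.card G < (p - 1) ^ Nat.card G := by
      calc (p - 1) ^ Nat.card G = Nat.card f.range * Nat.card f.ker := by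
            rw [← hsplit, hcardH]
        _ ≤ Nat.card G * (p - 1) ^ (Nat.card G - 1) := Nat.mul_le_mul hr hk
        _ < (p - 1) * (p - 1) ^ (Nat.card G - 1) := by
            have hpos : 0 < (p - 1) ^ (Nat.card G - 1) := Nat.pow_pos (by omega)
            exact (Nat.mul_lt_mul_right hpos).mpr hlt
        _ = (p - 1) ^ (Nat.card G - 1 + 1) := by rw [pow_succ, mul_comm]
        _ = (p - 1) ^ Nat.card G := by congr 1; omega
    exact absurd hcontra (lt_irrefl _)
  -- conclude: H ≤ range of inl, then equality by cardinality
  have hle : H ≤ (SemidirectProduct.inl : (G → C) →* (G → C) ⋊[wreathAut G C] G).range := by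
    rw [SemidirectProduct.range_inl_eq_ker_rightHom]
    intro w hw
    exact key w hw
  refine Subgroup.eq_of_le_of_card_ge hle ?_
  have h1 : Nat.card (SemidirectProduct.inl : (G → C) →* (G → C) ⋊[wreathAut G C] G).range
      = Nat.card (G → C) :=
    (Nat.card_congr (MonoidHom.ofInjective SemidirectProduct.inl_injective).toEquiv).symm
  rw [h1, Nat.card_congr e.toEquiv]
end

section
/- Let 1 → N → G̃ → G → 1 and 1 → N → S̃ → S → 1 be short exact sequences of groups with the same kernel N, and suppose the first is the pullback of the second along an injection G → S. If the map G → Out(N) induced by the first sequence is an isomorphism, then there is a homomorphism r : S → G that is a retraction of the injection G → S. -/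
/-- The inner automorphisms form a normal subgroup of `Aut(N)`. -/
instance innNormal (N : Type*) [Group N] : ((MulAut.conj : N →* MulAut N).range).Normal := by
  constructor
  rintro x ⟨n, rfl⟩ g
  refine ⟨g n, ?_⟩
  ext y
  simp [MulAut.conj, mul_assoc]

/-- Given two group extensions `1 → N → G̃ → G → 1` and `1 → N → S̃ → S → 1` with the
same kernel, such that the first is the pullback of the second along an injection
`i : G → S`, if the homomorphism `G → Out(N)` induced by the first extension is an
isomorphism, then there is a retraction `r : S → G` of `i`. -/
theorem stmt15 (N Gt G St S : Type*) [Group N] [Group Gt] [Group G] [Group St] [Group S]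
    (κ : N →* Gt) (π : Gt →* G)
    (hκ : Function.Injective κ) (hπ : Function.Surjective π) (hex : π.ker = κ.range)
    (κS : N →* St) (πS : St →* S)
    (hκS : Function.Injective κS) (hπS : Function.Surjective πS) (hexS : πS.ker = κS.range)
    (i : G →* S) (hi : Function.Injective i) (j : Gt →* St)
    (hjκ : j.comp κ = κS) (hsq : πS.comp j = i.comp π)
    (hcart : ∀ (s : St) (g : G), πS s = i g → ∃! x : Gt, j x = s ∧ π x = g)
    (ω : G →* MulAut N ⧸ (MulAut.conj : N →* MulAut N).range)
    (hω : ∀ x : Gt, ∃ a : MulAut N,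
      ω (π x) = (a : MulAut N ⧸ (MulAut.conj : N →* MulAut N).range) ∧
        ∀ y : N, κ (a y) = x * κ y * x⁻¹)
    (hbij : Function.Bijective ω) :
    ∃ r : S →* G, r.comp i = MonoidHom.id G := by
  classical
  -- identify `N` with the kernel of `πS`
  let eN : N ≃* (πS.ker : Subgroup St) :=
    (MonoidHom.ofInjective hκS).trans (MulEquiv.subgroupCongr hexS.symm)
  have hcoe : ∀ n : N, ((eN n : St)) = κS n := by
    intro n
    simp [eN, MulEquiv.subgroupCongr_apply, MonoidHom.ofInjective_apply]
  have hcoe' : ∀ z : πS.ker, κS (eN.symm z) = (z : St) := by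
    intro z
    rw [← hcoe (eN.symm z), MulEquiv.apply_symm_apply]
  -- the map `St → Out N` induced by conjugation
  let f : St →* MulAut N ⧸ (MulAut.conj : N →* MulAut N).range :=
    (QuotientGroup.mk' _).comp
      (((MulAut.congr eN).symm.toMonoidHom).comp MulAut.conjNormal)
  have hfb : ∀ (x : St) (y : N),
      κS (((MulAut.congr eN).symm (MulAut.conjNormal x)) y) = x * κS y * x⁻¹ := by
    intro x y
    show κS (eN.symm (MulAut.conjNormal x (eN y))) = _
    rw [hcoe', MulAut.conjNormal_apply, hcoe]
  -- `f` kills the kernel of `πS`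
  have hker : πS.ker ≤ f.ker := by
    intro z hz
    rw [hexS] at hz
    obtain ⟨n, rfl⟩ := hz
    have hb : ((MulAut.congr eN).symm (MulAut.conjNormal (κS n))) = MulAut.conj n := by
      ext y
      apply hκS
      rw [hfb]
      simp [mul_assoc]
    show (QuotientGroup.mk' _) ((MulAut.congr eN).symm (MulAut.conjNormal (κS n))) = 1
    rw [hb]
    exact (QuotientGroup.eq_one_iff _).mpr ⟨n, rfl⟩
  -- lift `f` to `S`
  let rt : S →* MulAut N ⧸ (MulAut.conj : N →* MulAut N).range :=
    πS.liftOfRightInverse (Function.surjInv hπS) (Function.rightInverse_surjInv hπS)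
      ⟨f, hker⟩
  have hrt : ∀ x : St, rt (πS x) = f x := fun x =>
    πS.liftOfRightInverse_comp_apply _ _ ⟨f, hker⟩ x
  -- the isomorphism `G ≃* Out N`
  let e : G ≃* MulAut N ⧸ (MulAut.conj : N →* MulAut N).range :=
    MulEquiv.ofBijective ω hbij
  refine ⟨e.symm.toMonoidHom.comp rt, ?_⟩
  ext g
  obtain ⟨x, rfl⟩ := hπ g
  have hig : i (π x) = πS (j x) := (DFunLike.congr_fun hsq x).symm
  obtain ⟨a, ha1, ha2⟩ := hω x
  have hfj : f (j x) = (a : MulAut N ⧸ (MulAut.conj : N →* MulAut N).range) := by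
    have hb : ((MulAut.congr eN).symm (MulAut.conjNormal (j x))) = a := by
      ext y
      apply hκS
      rw [hfb]
      have : κS (a y) = j x * κS y * (j x)⁻¹ := by
        rw [← hjκ]
        simp only [MonoidHom.comp_apply]
        rw [ha2 y]
        simp
      rw [this]
    show (QuotientGroup.mk' _) ((MulAut.congr eN).symm (MulAut.conjNormal (j x))) = _
    rw [hb]
    rfl
  have : e.symm (rt (i (π x))) = π x := by
    rw [hig, hrt, hfj, ← ha1]
    exact e.symm_apply_apply (π x)
  simpa using this
end

section
/- Let G be a finite group and suppose 1 → N → G̃ → G → 1 is a short exact sequence of finite groups such that the induced map G → Out(N) is an isomorphism, Z(N) = 1, and the only subgroup of G̃ ≅ Aut(N) isomorphic to N is Inn(N). Then for any two subgroups G₁, G₂ ≤ G whose preimages in G̃ are isomorphic, G₁ and G₂ are conjugate in G. -/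
/-- Let `N` be a finite group with trivial center and consider the extension
`1 → N → Aut(N) → G → 1`, encoded by a surjection `π : Aut(N) → G` whose kernel is
`Inn(N)` (the image of `N` under `MulAut.conj`); thus the induced map `G → Out(N)` is an
isomorphism.  Assume moreover that the only subgroup of `Aut(N)` isomorphic to `N` is
`Inn(N)`.  Then any two subgroups `G₁, G₂ ≤ G` whose preimages in `Aut(N)` are
isomorphic are conjugate in `G`. -/
theorem stmt19 (N : Type*) [Group N] [Finite N] (G : Type*) [Group G] [Finite G]
    (hZ : Subgroup.center N = ⊥)
    (π : MulAut N →* G) (hπ : Function.Surjective π)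
    (hker : π.ker = (MulAut.conj : N →* MulAut N).range)
    (huniq : ∀ H : Subgroup (MulAut N), Nonempty (H ≃* N) →
      H = (MulAut.conj : N →* MulAut N).range)
    (G₁ G₂ : Subgroup G)
    (hiso : Nonempty ((G₁.comap π) ≃* (G₂.comap π))) :
    ∃ g : G, G₁.map (MulAut.conj g).toMonoidHom = G₂ := by
  classical
  set c : N →* MulAut N := MulAut.conj with hc
  -- injectivity of conj
  have cinj : Function.Injective c := by
    intro a b h
    have key : ∀ x : N, a * x * a⁻¹ = b * x * b⁻¹ := fun x => by
      have := congrArg (fun e : MulAut N => e x) h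
      simpa [hc, MulAut.conj_apply] using this
    have hz : b⁻¹ * a ∈ Subgroup.center N := by
      rw [Subgroup.mem_center_iff]
      intro g
      calc g * (b⁻¹ * a) = b⁻¹ * (b * g * b⁻¹) * a := by group
        _ = b⁻¹ * (a * g * a⁻¹) * a := by rw [← key g]
        _ = b⁻¹ * a * g := by group
    rw [hZ, Subgroup.mem_bot] at hz
    have : b * (b⁻¹ * a) = b * 1 := by rw [hz]
    simpa using this
  -- Inn(N) is contained in each preimage
  have hmem : ∀ (H : Subgroup G) (n : N), c n ∈ H.comap π := by
    intro H n
    have : c n ∈ π.ker := by rw [hker]; exact ⟨n, rfl⟩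
    simp [Subgroup.mem_comap, MonoidHom.mem_ker.mp this, Subgroup.one_mem]
  obtain ⟨φ⟩ := hiso
  -- the map N →* K₁
  let j : N →* (G₁.comap π) := c.codRestrict _ (hmem G₁)
  have jinj : Function.Injective j := by
    intro a b h
    exact cinj (congrArg Subtype.val h)
  -- f : N →* MulAut N through φ
  let f : N →* MulAut N := (G₂.comap π).subtype.comp (φ.toMonoidHom.comp j)
  have finj : Function.Injective f :=
    (G₂.comap π).subtype_injective.comp (φ.injective.comp jinj)
  have hrange : f.range = c.range :=
    huniq _ ⟨(MonoidHom.ofInjective finj).symm⟩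
  -- α : N ≃* N with c (α n) = f n
  let α : MulAut N :=
    ((MonoidHom.ofInjective finj).trans
      ((MulEquiv.subgroupCongr hrange).trans (MonoidHom.ofInjective cinj).symm))
  have hα : ∀ n : N, c (α n) = f n := by
    intro n
    show c ((MonoidHom.ofInjective cinj).symm _) = f n
    rw [← MonoidHom.ofInjective_apply cinj, MulEquiv.apply_symm_apply]
    rfl
  -- conjugation identity in Aut
  have conj_conj : ∀ (a : MulAut N) (n : N), a * c n * a⁻¹ = c (a n) := by
    intro a n
    ext m
    simp [hc, MulAut.conj_apply, mul_assoc]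
  -- key: φ acts as conjugation by α
  have hφ : ∀ (a : MulAut N) (ha : a ∈ G₁.comap π),
      ((φ ⟨a, ha⟩ : (G₂.comap π)) : MulAut N) = α * a * α⁻¹ := by
    intro a ha
    set b : MulAut N := ((φ ⟨a, ha⟩ : (G₂.comap π)) : MulAut N) with hb
    have keyn : ∀ n : N, b (α n) = α (a n) := by
      intro n
      have h1 : (⟨a, ha⟩ : (G₁.comap π)) * j n * (⟨a, ha⟩ : (G₁.comap π))⁻¹ = j (a n) := by
        apply Subtype.ext
        show a * c n * a⁻¹ = c (a n)
        exact conj_conj a n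
      have h2 : b * c (α n) * b⁻¹ = c (α (a n)) := by
        rw [hα n, hα (a n)]
        show b * ((G₂.comap π).subtype (φ (j n))) * b⁻¹ = (G₂.comap π).subtype (φ (j (a n)))
        rw [← h1, map_mul, map_mul, map_mul, map_mul, map_inv, map_inv]
        rfl
      have h3 : c (b (α n)) = c (α (a n)) := by rw [← conj_conj b (α n), h2]
      exact cinj h3
    ext m
    have := keyn (α⁻¹ m)
    calc b m = b (α (α⁻¹ m)) := by rw [MulAut.apply_inv_self]
      _ = α (a (α⁻¹ m)) := keyn (α⁻¹ m)
      _ = (α * a * α⁻¹) m := rfl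
  -- K₂ = conjugate of K₁ by α
  have hK : (G₁.comap π).map (MulAut.conj α).toMonoidHom = G₂.comap π := by
    ext b
    simp only [Subgroup.mem_map, MulEquiv.coe_toMonoidHom, MulAut.conj_apply]
    constructor
    · rintro ⟨a, ha, rfl⟩
      have := hφ a ha
      rw [← this]
      exact (φ ⟨a, ha⟩).2
    · intro hb
      obtain ⟨⟨a, ha⟩, hEq⟩ := φ.surjective ⟨b, hb⟩
      refine ⟨a, ha, ?_⟩
      have h4 := hφ a ha
      rw [hEq] at h4
      exact h4.symm
  refine ⟨π α, ?_⟩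
  have hG1 : (G₁.comap π).map π = G₁ := Subgroup.map_comap_eq_self_of_surjective hπ G₁
  have hG2 : (G₂.comap π).map π = G₂ := Subgroup.map_comap_eq_self_of_surjective hπ G₂
  have hcomm : ((MulAut.conj (π α)).toMonoidHom.comp π) = π.comp (MulAut.conj α).toMonoidHom := by
    ext a
    simp [MulAut.conj_apply, map_mul, map_inv]
  calc G₁.map (MulAut.conj (π α)).toMonoidHom
      = ((G₁.comap π).map π).map (MulAut.conj (π α)).toMonoidHom := by rw [hG1]
    _ = (G₁.comap π).map ((MulAut.conj (π α)).toMonoidHom.comp π) := by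
        rw [Subgroup.map_map]
    _ = (G₁.comap π).map (π.comp (MulAut.conj α).toMonoidHom) := by rw [hcomm]
    _ = ((G₁.comap π).map (MulAut.conj α).toMonoidHom).map π := by rw [Subgroup.map_map]
    _ = (G₂.comap π).map π := by rw [hK]
    _ = G₂ := hG2
end
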